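/- Parametric type isomorphism in System D is an equivalence relation on types of each kind: it is reflexive (A ≅ A, witnessed by identity commands ⟨x ‖ α⟩ in both directions), symmetric, and transitive. Transitivity composes witnesses: if (c_B, c_A) witnesses A ≅ B and (c_C, c'_B) witnesses B ≅ C, then ⟨μβ.c_B ‖ μ̃y'.c_C⟩ and ⟨μβ'.c'_B ‖ μ̃y.c_A⟩ witness A ≅ C; the proof that their compositions equal identity commands uses the swap law reassociating same-discipline μ/μ̃ bindings together with ημ and ημ̃. -/

import Mathlib

/-!  System D / System CD: a core, fully dual, multi-discipline sequent
     calculus with user-declared data and codata types (the connectives of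
     the core System D — ⊕, ⊗, 0, 1, &, ⅋, ⊤, ⊥, ¬, ∼ and the four families
     of polarity shifts — arise as particular declarations), together with
     native existential and universal type quantifiers. -/

namespace SysD

/-- Evaluation disciplines: call-by-value (+), call-by-name (−),
    call-by-need (lv) and call-by-coneed (ln). -/
inductive Disc : Type
| pos | neg | lv | ln
deriving DecidableEq

/-- Types: discipline-annotated type variables, declared connectives applied
    to type arguments, and the existential/universal quantifiers. -/
inductive Ty : Type
| tvar : Disc → Nat → Ty
| fcon : Nat → List Ty → Ty
| ex : Disc → Nat → Ty → Ty      -- ∃X:S.A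
| all : Disc → Nat → Ty → Ty     -- ∀X:S.A

mutual
  /-- Substitution of a type for a type variable. -/
  def substTy : Ty → Nat → Ty → Ty
  | .tvar S Y, X, B => if Y = X then B else .tvar S Y
  | .fcon F Cs, X, B => .fcon F (substTyList Cs X B)
  | .ex S Y A, X, B => if Y = X then .ex S Y A else .ex S Y (substTy A X B)
  | .all S Y A, X, B => if Y = X then .all S Y A else .all S Y (substTy A X B)

  def substTyList : List Ty → Nat → Ty → List Ty
  | [], _, _ => []
  | C :: Cs, X, B => substTy C X B :: substTyList Cs X B
end

/-- The signature of a single constructor (for data) or destructor (for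
    codata): hidden/private type parameters Ȳ with their kinds, term inputs
    Ā, and coterm inputs B̄.  By convention the declaration's parameters X̄
    are referred to inside the component types as the type variables
    0, …, n−1 and the privates as n, n+1, …. -/
structure ConSig where
  tyArgs : List Disc
  tmArgs : List Ty
  coArgs : List Ty

/-- A (co)data declaration: data F (X̄:k̄) : S with K_i : ∀Ȳᵢ. Āᵢ ⊢ F X̄ | B̄ᵢ,
    or dually codata G (X̄:k̄) : S with O_i : ∀Ȳᵢ. Āᵢ | G X̄ ⊢ B̄ᵢ. -/
structure Decl where
  isData : Bool
  params : List Disc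
  disc : Disc
  sigs : List ConSig

/-- A global environment of declarations. -/
def GEnv : Type := Nat → Option Decl

mutual
  /-- Terms (producers). -/
  inductive Tm : Type
  | var : Nat → Tm
  | mu : Nat → Cmd → Tm                              -- μα.c
  | con : Nat → Nat → List Ty → CoTms → Tms → Tm     -- K_i B̄ ē v̄ of connective F
  | cocase : Branches → Tm                           -- cocase{O X̄ x̄ ᾱ ⇒ c | …}
  | pack : Ty → Tm → Tm                              -- pack B W : ∃X:S.A
  | lamSpec : Nat → Nat → Cmd → Tm                   -- λ[spec X α].c : ∀X:S.A

  /-- Coterms (consumers). -/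
  inductive CoTm : Type
  | covar : Nat → CoTm
  | mut : Nat → Cmd → CoTm                           -- μ̃x.c
  | des : Nat → Nat → List Ty → Tms → CoTms → CoTm   -- O_i B̄ v̄ ē of connective G
  | cases : Branches → CoTm                          -- case{K X̄ ᾱ x̄ ⇒ c | …}
  | spec : Ty → CoTm → CoTm                          -- spec B F : ∀X:S.A
  | casePack : Nat → Nat → Cmd → CoTm                -- μ̃(pack X y).c : ∃X:S.A

  inductive Tms : Type
  | nil : Tms
  | cons : Tm → Tms → Tms

  inductive CoTms : Type
  | nil : CoTms
  | cons : CoTm → CoTms → CoTms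

  /-- A branch binds private type variables, covariables, and variables. -/
  inductive Branch : Type
  | mk : List Nat → List Nat → List Nat → Cmd → Branch

  inductive Branches : Type
  | nil : Branches
  | cons : Branch → Branches → Branches

  /-- Commands, annotated by the discipline of the cut type. -/
  inductive Cmd : Type
  | cut : Tm → Disc → CoTm → Cmd
end

def Branches.get? : Branches → Nat → Option Branch
| .nil, _ => none
| .cons b _, 0 => some b
| .cons _ bs, n+1 => bs.get? n

/- Substitution of a term for a variable. -/
mutual
  def substVTm : Tm → Nat → Tm → Tm
  | .var y, x, v => if y = x then v else .var y
  | .mu a c, x, v => .mu a (substVCmd c x v)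
  | .con F i Bs es vs, x, v => .con F i Bs (substVCoTms es x v) (substVTms vs x v)
  | .cocase brs, x, v => .cocase (substVBrs brs x v)
  | .pack B w, x, v => .pack B (substVTm w x v)
  | .lamSpec X a c, x, v => .lamSpec X a (substVCmd c x v)

  def substVCo : CoTm → Nat → Tm → CoTm
  | .covar b, _, _ => .covar b
  | .mut y c, x, v => if y = x then .mut y c else .mut y (substVCmd c x v)
  | .des F i Bs vs es, x, v => .des F i Bs (substVTms vs x v) (substVCoTms es x v)
  | .cases brs, x, v => .cases (substVBrs brs x v)
  | .spec B f, x, v => .spec B (substVCo f x v)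
  | .casePack X y c, x, v =>
      if y = x then .casePack X y c else .casePack X y (substVCmd c x v)

  def substVTms : Tms → Nat → Tm → Tms
  | .nil, _, _ => .nil
  | .cons t ts, x, v => .cons (substVTm t x v) (substVTms ts x v)

  def substVCoTms : CoTms → Nat → Tm → CoTms
  | .nil, _, _ => .nil
  | .cons e es, x, v => .cons (substVCo e x v) (substVCoTms es x v)

  def substVBr : Branch → Nat → Tm → Branch
  | .mk tys cvs xs c, x, v =>
      if x ∈ xs then .mk tys cvs xs c else .mk tys cvs xs (substVCmd c x v)

  def substVBrs : Branches → Nat → Tm → Branches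
  | .nil, _, _ => .nil
  | .cons b bs, x, v => .cons (substVBr b x v) (substVBrs bs x v)

  def substVCmd : Cmd → Nat → Tm → Cmd
  | .cut t S e, x, v => .cut (substVTm t x v) S (substVCo e x v)
end

/- Substitution of a coterm for a covariable. -/
mutual
  def substETm : Tm → Nat → CoTm → Tm
  | .var y, _, _ => .var y
  | .mu b c, a, e => if b = a then .mu b c else .mu b (substECmd c a e)
  | .con F i Bs es vs, a, e => .con F i Bs (substECoTms es a e) (substETms vs a e)
  | .cocase brs, a, e => .cocase (substEBrs brs a e)
  | .pack B w, a, e => .pack B (substETm w a e)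
  | .lamSpec X b c, a, e =>
      if b = a then .lamSpec X b c else .lamSpec X b (substECmd c a e)

  def substECo : CoTm → Nat → CoTm → CoTm
  | .covar b, a, e => if b = a then e else .covar b
  | .mut y c, a, e => .mut y (substECmd c a e)
  | .des F i Bs vs es, a, e => .des F i Bs (substETms vs a e) (substECoTms es a e)
  | .cases brs, a, e => .cases (substEBrs brs a e)
  | .spec B f, a, e => .spec B (substECo f a e)
  | .casePack X y c, a, e => .casePack X y (substECmd c a e)

  def substETms : Tms → Nat → CoTm → Tms
  | .nil, _, _ => .nil
  | .cons t ts, a, e => .cons (substETm t a e) (substETms ts a e)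

  def substECoTms : CoTms → Nat → CoTm → CoTms
  | .nil, _, _ => .nil
  | .cons e' es, a, e => .cons (substECo e' a e) (substECoTms es a e)

  def substEBr : Branch → Nat → CoTm → Branch
  | .mk tys cvs xs c, a, e =>
      if a ∈ cvs then .mk tys cvs xs c else .mk tys cvs xs (substECmd c a e)

  def substEBrs : Branches → Nat → CoTm → Branches
  | .nil, _, _ => .nil
  | .cons b bs, a, e => .cons (substEBr b a e) (substEBrs bs a e)

  def substECmd : Cmd → Nat → CoTm → Cmd
  | .cut t S e', a, e => .cut (substETm t a e) S (substECo e' a e)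
end

/- Substitution of a type for a type variable in program syntax. -/
mutual
  def substTTm : Tm → Nat → Ty → Tm
  | .var y, _, _ => .var y
  | .mu a c, X, B => .mu a (substTCmd c X B)
  | .con F i Bs es vs, X, B =>
      .con F i (substTyList Bs X B) (substTCoTms es X B) (substTTms vs X B)
  | .cocase brs, X, B => .cocase (substTBrs brs X B)
  | .pack C w, X, B => .pack (substTy C X B) (substTTm w X B)
  | .lamSpec Y a c, X, B =>
      if Y = X then .lamSpec Y a c else .lamSpec Y a (substTCmd c X B)

  def substTCo : CoTm → Nat → Ty → CoTm
  | .covar b, _, _ => .covar b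
  | .mut y c, X, B => .mut y (substTCmd c X B)
  | .des F i Bs vs es, X, B =>
      .des F i (substTyList Bs X B) (substTTms vs X B) (substTCoTms es X B)
  | .cases brs, X, B => .cases (substTBrs brs X B)
  | .spec C f, X, B => .spec (substTy C X B) (substTCo f X B)
  | .casePack Y y c, X, B =>
      if Y = X then .casePack Y y c else .casePack Y y (substTCmd c X B)

  def substTTms : Tms → Nat → Ty → Tms
  | .nil, _, _ => .nil
  | .cons t ts, X, B => .cons (substTTm t X B) (substTTms ts X B)

  def substTCoTms : CoTms → Nat → Ty → CoTms
  | .nil, _, _ => .nil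
  | .cons e es, X, B => .cons (substTCo e X B) (substTCoTms es X B)

  def substTBr : Branch → Nat → Ty → Branch
  | .mk tys cvs xs c, X, B =>
      if X ∈ tys then .mk tys cvs xs c else .mk tys cvs xs (substTCmd c X B)

  def substTBrs : Branches → Nat → Ty → Branches
  | .nil, _, _ => .nil
  | .cons b bs, X, B => .cons (substTBr b X B) (substTBrs bs X B)

  def substTCmd : Cmd → Nat → Ty → Cmd
  | .cut t S e, X, B => .cut (substTTm t X B) S (substTCo e X B)
end

/-- Iterated substitution of a list of terms for a list of variables. -/
def substVsCmd : Cmd → List Nat → Tms → Cmd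
| c, [], _ => c
| c, _, .nil => c
| c, x :: xs, .cons v vs => substVsCmd (substVCmd c x v) xs vs

def substEsCmd : Cmd → List Nat → CoTms → Cmd
| c, [], _ => c
| c, _, .nil => c
| c, a :: as_, .cons e es => substEsCmd (substECmd c a e) as_ es

def substTsCmd : Cmd → List Nat → List Ty → Cmd
| c, [], _ => c
| c, _, [] => c
| c, X :: Xs, B :: Bs => substTsCmd (substTCmd c X B) Xs Bs

/- Free (co)variables. -/
mutual
  def fvTm : Tm → List Nat
  | .var y => [y]
  | .mu _ c => fvCmd c
  | .con _ _ _ es vs => fvCoTms es ++ fvTms vs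
  | .cocase brs => fvBrs brs
  | .pack _ w => fvTm w
  | .lamSpec _ _ c => fvCmd c

  def fvCo : CoTm → List Nat
  | .covar _ => []
  | .mut y c => (fvCmd c).filter (· ≠ y)
  | .des _ _ _ vs es => fvTms vs ++ fvCoTms es
  | .cases brs => fvBrs brs
  | .spec _ f => fvCo f
  | .casePack _ y c => (fvCmd c).filter (· ≠ y)

  def fvTms : Tms → List Nat
  | .nil => []
  | .cons t ts => fvTm t ++ fvTms ts

  def fvCoTms : CoTms → List Nat
  | .nil => []
  | .cons e es => fvCo e ++ fvCoTms es

  def fvBr : Branch → List Nat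
  | .mk _ _ xs c => (fvCmd c).filter (· ∉ xs)

  def fvBrs : Branches → List Nat
  | .nil => []
  | .cons b bs => fvBr b ++ fvBrs bs

  def fvCmd : Cmd → List Nat
  | .cut t _ e => fvTm t ++ fvCo e
end

mutual
  def fcvTm : Tm → List Nat
  | .var _ => []
  | .mu b c => (fcvCmd c).filter (· ≠ b)
  | .con _ _ _ es vs => fcvCoTms es ++ fcvTms vs
  | .cocase brs => fcvBrs brs
  | .pack _ w => fcvTm w
  | .lamSpec _ b c => (fcvCmd c).filter (· ≠ b)

  def fcvCo : CoTm → List Nat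
  | .covar b => [b]
  | .mut _ c => fcvCmd c
  | .des _ _ _ vs es => fcvTms vs ++ fcvCoTms es
  | .cases brs => fcvBrs brs
  | .spec _ f => fcvCo f
  | .casePack _ _ c => fcvCmd c

  def fcvTms : Tms → List Nat
  | .nil => []
  | .cons t ts => fcvTm t ++ fcvTms ts

  def fcvCoTms : CoTms → List Nat
  | .nil => []
  | .cons e es => fcvCo e ++ fcvCoTms es

  def fcvBr : Branch → List Nat
  | .mk _ cvs _ c => (fcvCmd c).filter (· ∉ cvs)

  def fcvBrs : Branches → List Nat
  | .nil => []
  | .cons b bs => fcvBr b ++ fcvBrs bs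

  def fcvCmd : Cmd → List Nat
  | .cut t _ e => fcvTm t ++ fcvCo e
end

/- Weak-head normal terms W and forcing coterms F. -/
mutual
  inductive IsW : Tm → Prop
  | var (x : Nat) : IsW (.var x)
  | con {es : CoTms} {vs : Tms} (F i : Nat) (Bs : List Ty) :
      AllF es → AllW vs → IsW (.con F i Bs es vs)
  | cocase (brs : Branches) : IsW (.cocase brs)
  | pack {w : Tm} (B : Ty) : IsW w → IsW (.pack B w)
  | lamSpec (X a : Nat) (c : Cmd) : IsW (.lamSpec X a c)

  inductive AllW : Tms → Prop
  | nil : AllW .nil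
  | cons {t : Tm} {ts : Tms} : IsW t → AllW ts → AllW (.cons t ts)

  inductive IsF : CoTm → Prop
  | covar (a : Nat) : IsF (.covar a)
  | des {vs : Tms} {es : CoTms} (F i : Nat) (Bs : List Ty) :
      AllW vs → AllF es → IsF (.des F i Bs vs es)
  | cases (brs : Branches) : IsF (.cases brs)
  | spec {f : CoTm} (B : Ty) : IsF f → IsF (.spec B f)
  | casePack (X y : Nat) (c : Cmd) : IsF (.casePack X y c)

  inductive AllF : CoTms → Prop
  | nil : AllF .nil
  | cons {e : CoTm} {es : CoTms} : IsF e → AllF es → AllF (.cons e es)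
end

/-- Heap contexts: stacks of delayed call-by-need variable bindings and
    call-by-coneed covariable bindings:
    H ::= □ | ⟨v ‖ μ̃x.H⟩ (at lv) | ⟨μα.H ‖ e⟩ (at ln). -/
inductive Heap : Type
| hole : Heap
| lvBind : Tm → Nat → Heap → Heap
| lnBind : Nat → Heap → CoTm → Heap

def Heap.fill : Heap → Cmd → Cmd
| .hole, c => c
| .lvBind v x H, c => .cut v .lv (.mut x (H.fill c))
| .lnBind a H e, c => .cut (.mu a (H.fill c)) .ln e

def Heap.BindsVar : Heap → Nat → Prop
| .hole, _ => False
| .lvBind _ x H, y => x = y ∨ H.BindsVar y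
| .lnBind _ H _, y => H.BindsVar y

def Heap.BindsCovar : Heap → Nat → Prop
| .hole, _ => False
| .lvBind _ _ H, b => H.BindsCovar b
| .lnBind a H _, b => a = b ∨ H.BindsCovar b

/-- Discipline-indexed values:  V₊ = W,  V₋ = any term,  V_lv = W,
    V_ln = W or μα.H[⟨V_ln ‖ α⟩] where H does not rebind α. -/
inductive Val : Disc → Tm → Prop
| pos {v : Tm} : IsW v → Val .pos v
| neg (v : Tm) : Val .neg v
| lv {v : Tm} : IsW v → Val .lv v
| lnW {v : Tm} : IsW v → Val .ln v
| lnMu {v : Tm} {H : Heap} (a : Nat) :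
    Val .ln v → ¬ H.BindsCovar a →
    Val .ln (.mu a (H.fill (.cut v .ln (.covar a))))

/-- Discipline-indexed covalues:  E₊ = any coterm,  E₋ = F,  E_ln = F,
    E_lv = F or μ̃x.H[⟨x ‖ E_lv⟩] where H does not rebind x. -/
inductive Coval : Disc → CoTm → Prop
| pos (e : CoTm) : Coval .pos e
| neg {e : CoTm} : IsF e → Coval .neg e
| ln {e : CoTm} : IsF e → Coval .ln e
| lvF {e : CoTm} : IsF e → Coval .lv e
| lvMut {e : CoTm} {H : Heap} (x : Nat) :
    Coval .lv e → ¬ H.BindsVar x →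
    Coval .lv (.mut x (H.fill (.cut (.var x) .lv e)))

/-- The standard (operational) reduction of System D/CD. -/
inductive Step : Cmd → Cmd → Prop
| betaMu {S : Disc} {e : CoTm} (a : Nat) (c : Cmd) :
    S ≠ .ln → Coval S e →
    Step (.cut (.mu a c) S e) (substECmd c a e)
| betaMut {S : Disc} {v : Tm} (x : Nat) (c : Cmd) :
    S ≠ .lv → Val S v →
    Step (.cut v S (.mut x c)) (substVCmd c x v)
| betaMuConeed {e : CoTm} (a : Nat) (c : Cmd) :
    Val .ln (.mu a c) → (∀ b, e ≠ .covar b) → Coval .ln e →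
    Step (.cut (.mu a c) .ln e) (substECmd c a e)
| betaMutNeed {v : Tm} (x : Nat) (c : Cmd) :
    Coval .lv (.mut x c) → (∀ y, v ≠ .var y) → Val .lv v →
    Step (.cut v .lv (.mut x c)) (substVCmd c x v)
| betaP {es : CoTms} {vs : Tms} {brs : Branches}
    (F i : Nat) (Bs : List Ty) (S : Disc) (tys cvs xs : List Nat) (c : Cmd) :
    brs.get? i = some (.mk tys cvs xs c) →
    AllF es → AllW vs →
    Step (.cut (.con F i Bs es vs) S (.cases brs))
         (substVsCmd (substEsCmd (substTsCmd c tys Bs) cvs es) xs vs)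
| betaQ {vs : Tms} {es : CoTms} {brs : Branches}
    (F i : Nat) (Bs : List Ty) (S : Disc) (tys xs cvs : List Nat) (c : Cmd) :
    brs.get? i = some (.mk tys cvs xs c) →
    AllW vs → AllF es →
    Step (.cut (.cocase brs) S (.des F i Bs vs es))
         (substEsCmd (substVsCmd (substTsCmd c tys Bs) xs vs) cvs es)
| betaPack {w : Tm} (B : Ty) (X y : Nat) (c : Cmd) :
    IsW w →
    Step (.cut (.pack B w) .pos (.casePack X y c))
         (substVCmd (substTCmd c X B) y w)
| betaSpec {f : CoTm} (B : Ty) (X a : Nat) (c : Cmd) :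
    IsF f →
    Step (.cut (.lamSpec X a c) .neg (.spec B f))
         (substECmd (substTCmd c X B) a f)
| heap {c c' : Cmd} (H : Heap) :
    Step c c' → Step (H.fill c) (H.fill c')

/-- A command that admits no standard reduction step. -/
def Irred (c : Cmd) : Prop := ¬ ∃ c', Step c c'

/-- `x` is a needed variable of `c`. -/
def NeededVar (c : Cmd) (x : Nat) : Prop :=
  Irred c ∧ ∃ (H : Heap) (S : Disc) (E : CoTm),
    Coval S E ∧ ¬ H.BindsVar x ∧ c = H.fill (.cut (.var x) S E)

/-- `a` is a needed covariable of `c`. -/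
def NeededCovar (c : Cmd) (a : Nat) : Prop :=
  Irred c ∧ ∃ (H : Heap) (S : Disc) (V : Tm),
    Val S V ∧ ¬ H.BindsCovar a ∧ c = H.fill (.cut V S (.covar a))

/-- A command is finished when it needs some (co)variable. -/
def Finished (c : Cmd) : Prop :=
  Irred c ∧ ∃ z, NeededVar c z ∨ NeededCovar c z

/-- A command is stuck when it cannot step and needs no (co)variable. -/
def Stuck (c : Cmd) : Prop :=
  Irred c ∧ ¬ ∃ z, NeededVar c z ∨ NeededCovar c z

end SysD

namespace SysD

/-- Kind environments: type variables to disciplines. -/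
def KEnv : Type := Nat → Option Disc
/-- Typing environments: (co)variables to types. -/
def TEnv : Type := Nat → Option Ty

def upd {α : Type} (f : Nat → Option α) (n : Nat) (a : α) : Nat → Option α :=
  fun m => if m = n then some a else f m

def upds {α : Type} (f : Nat → Option α) (ns : List Nat) (as_ : List α) :
    Nat → Option α :=
  (ns.zip as_).foldl (fun g p => upd g p.1 p.2) f

/-- The empty environment. -/
def none_ {α : Type} : Nat → Option α := fun _ => none

/-- The singleton environment. -/
def single {α : Type} (n : Nat) (a : α) : Nat → Option α := upd none_ n a

mutual
  /-- Well-kinded types: Θ ⊢ A : S. -/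
  inductive TyWf (G : GEnv) : KEnv → Ty → Disc → Prop
  | tvar {Θ : KEnv} {S : Disc} {X : Nat} :
      Θ X = some S → TyWf G Θ (.tvar S X) S
  | fcon {Θ : KEnv} {F : Nat} {Cs : List Ty} {d : Decl} :
      G F = some d → TyArgsWf G Θ Cs d.params → TyWf G Θ (.fcon F Cs) d.disc
  | ex {Θ : KEnv} {S : Disc} {X : Nat} {A : Ty} :
      TyWf G (upd Θ X S) A .pos → TyWf G Θ (.ex S X A) .pos
  | all {Θ : KEnv} {S : Disc} {X : Nat} {A : Ty} :
      TyWf G (upd Θ X S) A .neg → TyWf G Θ (.all S X A) .neg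

  /-- Well-kinded lists of type arguments against a list of kinds. -/
  inductive TyArgsWf (G : GEnv) : KEnv → List Ty → List Disc → Prop
  | nil {Θ : KEnv} : TyArgsWf G Θ [] []
  | cons {Θ : KEnv} {C : Ty} {Cs : List Ty} {S : Disc} {Ss : List Disc} :
      TyWf G Θ C S → TyArgsWf G Θ Cs Ss → TyArgsWf G Θ (C :: Cs) (S :: Ss)
end

/-- Instantiate a signature component type: substitute the types σ for the
    canonically-named type variables 0, …, |σ|−1 (parameters followed by
    privates). -/
def instTy (σ : List Ty) (A : Ty) : Ty :=
  ((List.range σ.length).zip σ).foldl (fun B p => substTy B p.1 p.2) A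

def instTys (σ : List Ty) (As : List Ty) : List Ty := As.map (instTy σ)

/-- The type variables corresponding to a branch's bound private names. -/
def tvarsOf (Ss : List Disc) (ns : List Nat) : List Ty :=
  List.zipWith (fun S n => Ty.tvar S n) Ss ns

mutual
  /-- Typing of commands: c : (Γ ⊢_G^Θ Δ). -/
  inductive TyCmd (G : GEnv) : KEnv → TEnv → TEnv → Cmd → Prop
  | cut {Θ : KEnv} {Γ Δ : TEnv} {v : Tm} {e : CoTm} {A : Ty} {S : Disc} :
      TyTm G Θ Γ Δ v A → TyWf G Θ A S → TyCo G Θ Γ Δ e A →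
      TyCmd G Θ Γ Δ (.cut v S e)

  /-- Typing of general terms: Γ ⊢_G^Θ v : A | Δ. -/
  inductive TyTm (G : GEnv) : KEnv → TEnv → TEnv → Tm → Ty → Prop
  | foc {Θ : KEnv} {Γ Δ : TEnv} {v : Tm} {A : Ty} :
      TyTmF G Θ Γ Δ v A → TyTm G Θ Γ Δ v A
  | mu {Θ : KEnv} {Γ Δ : TEnv} {a : Nat} {c : Cmd} {A : Ty} :
      TyCmd G Θ Γ (upd Δ a A) c → TyTm G Θ Γ Δ (.mu a c) A

  /-- Focused typing of terms: Γ ⊢_G^Θ V : A ; Δ. -/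
  inductive TyTmF (G : GEnv) : KEnv → TEnv → TEnv → Tm → Ty → Prop
  | var {Θ : KEnv} {Γ Δ : TEnv} {x : Nat} {A : Ty} :
      Γ x = some A → TyTmF G Θ Γ Δ (.var x) A
  | blur {Θ : KEnv} {Γ Δ : TEnv} {v : Tm} {A : Ty} {S : Disc} :
      TyTm G Θ Γ Δ v A → TyWf G Θ A S → Val S v → TyTmF G Θ Γ Δ v A
  | con {Θ : KEnv} {Γ Δ : TEnv} {F i : Nat} {Cs Bs : List Ty} {d : Decl}
      {sg : ConSig} {es : CoTms} {vs : Tms} :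
      G F = some d → d.isData = true → d.sigs[i]? = some sg →
      TyArgsWf G Θ Cs d.params → TyArgsWf G Θ Bs sg.tyArgs →
      TyCoFs G Θ Γ Δ es (instTys (Cs ++ Bs) sg.coArgs) →
      TyTmFs G Θ Γ Δ vs (instTys (Cs ++ Bs) sg.tmArgs) →
      TyTmF G Θ Γ Δ (.con F i Bs es vs) (.fcon F Cs)
  | cocase {Θ : KEnv} {Γ Δ : TEnv} {F : Nat} {Cs : List Ty} {d : Decl}
      {brs : Branches} :
      G F = some d → d.isData = false →
      TyBrs G Θ Γ Δ Cs d.sigs brs →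
      TyTmF G Θ Γ Δ (.cocase brs) (.fcon F Cs)
  | pack {Θ : KEnv} {Γ Δ : TEnv} {B A : Ty} {S : Disc} {X : Nat} {w : Tm} :
      TyWf G Θ B S → TyTmF G Θ Γ Δ w (substTy A X B) →
      TyTmF G Θ Γ Δ (.pack B w) (.ex S X A)
  | lamSpec {Θ : KEnv} {Γ Δ : TEnv} {S : Disc} {X a : Nat} {A : Ty} {c : Cmd} :
      TyCmd G (upd Θ X S) Γ (upd Δ a A) c →
      TyTmF G Θ Γ Δ (.lamSpec X a c) (.all S X A)

  /-- Typing of general coterms: Γ | e : A ⊢_G^Θ Δ. -/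
  inductive TyCo (G : GEnv) : KEnv → TEnv → TEnv → CoTm → Ty → Prop
  | foc {Θ : KEnv} {Γ Δ : TEnv} {e : CoTm} {A : Ty} :
      TyCoF G Θ Γ Δ e A → TyCo G Θ Γ Δ e A
  | mut {Θ : KEnv} {Γ Δ : TEnv} {x : Nat} {c : Cmd} {A : Ty} :
      TyCmd G Θ (upd Γ x A) Δ c → TyCo G Θ Γ Δ (.mut x c) A

  /-- Focused typing of coterms: Γ ; E : A ⊢_G^Θ Δ. -/
  inductive TyCoF (G : GEnv) : KEnv → TEnv → TEnv → CoTm → Ty → Prop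
  | covar {Θ : KEnv} {Γ Δ : TEnv} {a : Nat} {A : Ty} :
      Δ a = some A → TyCoF G Θ Γ Δ (.covar a) A
  | blur {Θ : KEnv} {Γ Δ : TEnv} {e : CoTm} {A : Ty} {S : Disc} :
      TyWf G Θ A S → TyCo G Θ Γ Δ e A → Coval S e → TyCoF G Θ Γ Δ e A
  | des {Θ : KEnv} {Γ Δ : TEnv} {F i : Nat} {Cs Bs : List Ty} {d : Decl}
      {sg : ConSig} {vs : Tms} {es : CoTms} :
      G F = some d → d.isData = false → d.sigs[i]? = some sg →
      TyArgsWf G Θ Cs d.params → TyArgsWf G Θ Bs sg.tyArgs →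
      TyTmFs G Θ Γ Δ vs (instTys (Cs ++ Bs) sg.tmArgs) →
      TyCoFs G Θ Γ Δ es (instTys (Cs ++ Bs) sg.coArgs) →
      TyCoF G Θ Γ Δ (.des F i Bs vs es) (.fcon F Cs)
  | cases {Θ : KEnv} {Γ Δ : TEnv} {F : Nat} {Cs : List Ty} {d : Decl}
      {brs : Branches} :
      G F = some d → d.isData = true →
      TyBrs G Θ Γ Δ Cs d.sigs brs →
      TyCoF G Θ Γ Δ (.cases brs) (.fcon F Cs)
  | spec {Θ : KEnv} {Γ Δ : TEnv} {B A : Ty} {S : Disc} {X : Nat} {f : CoTm} :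
      TyWf G Θ B S → TyCoF G Θ Γ Δ f (substTy A X B) →
      TyCoF G Θ Γ Δ (.spec B f) (.all S X A)
  | casePack {Θ : KEnv} {Γ Δ : TEnv} {S : Disc} {X y : Nat} {A : Ty} {c : Cmd} :
      TyCmd G (upd Θ X S) (upd Γ y A) Δ c →
      TyCoF G Θ Γ Δ (.casePack X y c) (.ex S X A)

  inductive TyTmFs (G : GEnv) : KEnv → TEnv → TEnv → Tms → List Ty → Prop
  | nil {Θ : KEnv} {Γ Δ : TEnv} : TyTmFs G Θ Γ Δ .nil []
  | cons {Θ : KEnv} {Γ Δ : TEnv} {t : Tm} {ts : Tms} {A : Ty} {As : List Ty} :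
      TyTmF G Θ Γ Δ t A → TyTmFs G Θ Γ Δ ts As →
      TyTmFs G Θ Γ Δ (.cons t ts) (A :: As)

  inductive TyCoFs (G : GEnv) : KEnv → TEnv → TEnv → CoTms → List Ty → Prop
  | nil {Θ : KEnv} {Γ Δ : TEnv} : TyCoFs G Θ Γ Δ .nil []
  | cons {Θ : KEnv} {Γ Δ : TEnv} {e : CoTm} {es : CoTms} {A : Ty} {As : List Ty} :
      TyCoF G Θ Γ Δ e A → TyCoFs G Θ Γ Δ es As →
      TyCoFs G Θ Γ Δ (.cons e es) (A :: As)

  /-- Typing of a list of (co)pattern-matching branches against a list of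
      (co)constructor signatures, at type arguments Cs. -/
  inductive TyBrs (G : GEnv) : KEnv → TEnv → TEnv → List Ty → List ConSig → Branches → Prop
  | nil {Θ : KEnv} {Γ Δ : TEnv} {Cs : List Ty} : TyBrs G Θ Γ Δ Cs [] .nil
  | cons {Θ : KEnv} {Γ Δ : TEnv} {Cs : List Ty} {sg : ConSig} {sgs : List ConSig}
      {tys cvs xs : List Nat} {c : Cmd} {brs : Branches} :
      tys.length = sg.tyArgs.length →
      cvs.length = sg.coArgs.length →
      xs.length = sg.tmArgs.length →
      TyCmd G (upds Θ tys sg.tyArgs)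
        (upds Γ xs (instTys (Cs ++ tvarsOf sg.tyArgs tys) sg.tmArgs))
        (upds Δ cvs (instTys (Cs ++ tvarsOf sg.tyArgs tys) sg.coArgs))
        c →
      TyBrs G Θ Γ Δ Cs sgs brs →
      TyBrs G Θ Γ Δ Cs (sg :: sgs) (.cons (.mk tys cvs xs c) brs)
end

end SysD

namespace SysD

def varsTms : List Nat → Tms
| [] => .nil
| x :: xs => .cons (.var x) (varsTms xs)

def covarsCoTms : List Nat → CoTms
| [] => .nil
| a :: as_ => .cons (.covar a) (covarsCoTms as_)

/-- The canonical η-expansion branch for the i-th constructor of a data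
    declaration: K X̄ ᾱ x̄ ⇒ ⟨K X̄ ᾱ x̄ ‖ α⟩ (with the bound covariables chosen
    away from the free covariable α). -/
def etaBrData (F i : Nat) (sg : ConSig) (S : Disc) (a : Nat) : Branch :=
  let tys := List.range sg.tyArgs.length
  let cvs := (List.range sg.coArgs.length).map (fun j => a + 1 + j)
  let xs := List.range sg.tmArgs.length
  .mk tys cvs xs
    (.cut (.con F i (tvarsOf sg.tyArgs tys) (covarsCoTms cvs) (varsTms xs))
      S (.covar a))

def etaBrsDataAux (F : Nat) (S : Disc) (a : Nat) : Nat → List ConSig → Branches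
| _, [] => .nil
| i, sg :: sgs => .cons (etaBrData F i sg S a) (etaBrsDataAux F S a (i+1) sgs)

def etaBrsData (F : Nat) (sgs : List ConSig) (S : Disc) (a : Nat) : Branches :=
  etaBrsDataAux F S a 0 sgs

/-- The canonical η-expansion branch for the i-th destructor of a codata
    declaration: O X̄ x̄ ᾱ ⇒ ⟨x ‖ O X̄ x̄ ᾱ⟩. -/
def etaBrCodata (F i : Nat) (sg : ConSig) (S : Disc) (x : Nat) : Branch :=
  let tys := List.range sg.tyArgs.length
  let cvs := List.range sg.coArgs.length
  let xs := (List.range sg.tmArgs.length).map (fun j => x + 1 + j)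
  .mk tys cvs xs
    (.cut (.var x) S
      (.des F i (tvarsOf sg.tyArgs tys) (varsTms xs) (covarsCoTms cvs)))

def etaBrsCodataAux (F : Nat) (S : Disc) (x : Nat) : Nat → List ConSig → Branches
| _, [] => .nil
| i, sg :: sgs => .cons (etaBrCodata F i sg S x) (etaBrsCodataAux F S x (i+1) sgs)

def etaBrsCodata (F : Nat) (sgs : List ConSig) (S : Disc) (x : Nat) : Branches :=
  etaBrsCodataAux F S x 0 sgs

mutual
  /-- The equational theory of System D/CD on commands: βμ, βμ̃, βp, βq, the
      swap laws for call-by-(co)need bindings, together with reflexivity,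
      symmetry, transitivity, and compatibility. -/
  inductive EqCmd (G : GEnv) : Cmd → Cmd → Prop
  | betaMu {S : Disc} {e : CoTm} (a : Nat) (c : Cmd) :
      Coval S e → EqCmd G (.cut (.mu a c) S e) (substECmd c a e)
  | betaMut {S : Disc} {v : Tm} (x : Nat) (c : Cmd) :
      Val S v → EqCmd G (.cut v S (.mut x c)) (substVCmd c x v)
  | betaP {es : CoTms} {vs : Tms} {brs : Branches}
      (F i : Nat) (Bs : List Ty) (S : Disc) (tys cvs xs : List Nat) (c : Cmd) :
      brs.get? i = some (.mk tys cvs xs c) →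
      AllF es → AllW vs →
      EqCmd G (.cut (.con F i Bs es vs) S (.cases brs))
        (substVsCmd (substEsCmd (substTsCmd c tys Bs) cvs es) xs vs)
  | betaQ {vs : Tms} {es : CoTms} {brs : Branches}
      (F i : Nat) (Bs : List Ty) (S : Disc) (tys xs cvs : List Nat) (c : Cmd) :
      brs.get? i = some (.mk tys cvs xs c) →
      AllW vs → AllF es →
      EqCmd G (.cut (.cocase brs) S (.des F i Bs vs es))
        (substEsCmd (substVsCmd (substTsCmd c tys Bs) xs vs) cvs es)
  | betaPack {w : Tm} (B : Ty) (X y : Nat) (c : Cmd) :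
      IsW w →
      EqCmd G (.cut (.pack B w) .pos (.casePack X y c))
        (substVCmd (substTCmd c X B) y w)
  | betaSpec {f : CoTm} (B : Ty) (X a : Nat) (c : Cmd) :
      IsF f →
      EqCmd G (.cut (.lamSpec X a c) .neg (.spec B f))
        (substECmd (substTCmd c X B) a f)
  | swapLv {v : Tm} {e : CoTm} (a y : Nat) (c : Cmd) :
      y ∉ fvCo e → a ∉ fcvTm v →
      EqCmd G (.cut (.mu a (.cut v .lv (.mut y c))) .lv e)
              (.cut v .lv (.mut y (.cut (.mu a c) .lv e)))
  | swapLn {v : Tm} {e : CoTm} (b x : Nat) (c : Cmd) :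
      x ∉ fvCo e → b ∉ fcvTm v →
      EqCmd G (.cut v .ln (.mut x (.cut (.mu b c) .ln e)))
              (.cut (.mu b (.cut v .ln (.mut x c))) .ln e)
  | refl (c : Cmd) : EqCmd G c c
  | symm {c c' : Cmd} : EqCmd G c c' → EqCmd G c' c
  | trans {c c' c'' : Cmd} : EqCmd G c c' → EqCmd G c' c'' → EqCmd G c c''
  | congCut {v v' : Tm} {e e' : CoTm} (S : Disc) :
      EqTm G v v' → EqCo G e e' → EqCmd G (.cut v S e) (.cut v' S e')

  /-- The equational theory on terms: ημ, the restricted ηq laws, and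
      compatibility. -/
  inductive EqTm (G : GEnv) : Tm → Tm → Prop
  | etaMu {v : Tm} (a : Nat) (S : Disc) :
      a ∉ fcvTm v → EqTm G (.mu a (.cut v S (.covar a))) v
  | etaQ {F : Nat} {d : Decl} (x : Nat) :
      G F = some d → d.isData = false →
      EqTm G (.cocase (etaBrsCodata F d.sigs d.disc x)) (.var x)
  | etaSpec (S : Disc) (X a x : Nat) :
      EqTm G (.lamSpec X a (.cut (.var x) .neg (.spec (.tvar S X) (.covar a))))
             (.var x)
  | refl (v : Tm) : EqTm G v v
  | symm {v v' : Tm} : EqTm G v v' → EqTm G v' v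
  | trans {v v' v'' : Tm} : EqTm G v v' → EqTm G v' v'' → EqTm G v v''
  | congMu {c c' : Cmd} (a : Nat) : EqCmd G c c' → EqTm G (.mu a c) (.mu a c')
  | congCon {es es' : CoTms} {vs vs' : Tms} (F i : Nat) (Bs : List Ty) :
      EqCoTms G es es' → EqTms G vs vs' →
      EqTm G (.con F i Bs es vs) (.con F i Bs es' vs')
  | congCocase {brs brs' : Branches} :
      EqBrs G brs brs' → EqTm G (.cocase brs) (.cocase brs')
  | congPack {w w' : Tm} (B : Ty) :
      EqTm G w w' → EqTm G (.pack B w) (.pack B w')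
  | congLamSpec {c c' : Cmd} (X a : Nat) :
      EqCmd G c c' → EqTm G (.lamSpec X a c) (.lamSpec X a c')

  /-- The equational theory on coterms: ημ̃, the restricted ηp laws, and
      compatibility. -/
  inductive EqCo (G : GEnv) : CoTm → CoTm → Prop
  | etaMut {e : CoTm} (x : Nat) (S : Disc) :
      x ∉ fvCo e → EqCo G (.mut x (.cut (.var x) S e)) e
  | etaP {F : Nat} {d : Decl} (a : Nat) :
      G F = some d → d.isData = true →
      EqCo G (.cases (etaBrsData F d.sigs d.disc a)) (.covar a)
  | etaPack (S : Disc) (X y a : Nat) :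
      EqCo G (.casePack X y (.cut (.pack (.tvar S X) (.var y)) .pos (.covar a)))
             (.covar a)
  | refl (e : CoTm) : EqCo G e e
  | symm {e e' : CoTm} : EqCo G e e' → EqCo G e' e
  | trans {e e' e'' : CoTm} : EqCo G e e' → EqCo G e' e'' → EqCo G e e''
  | congMut {c c' : Cmd} (x : Nat) : EqCmd G c c' → EqCo G (.mut x c) (.mut x c')
  | congDes {vs vs' : Tms} {es es' : CoTms} (F i : Nat) (Bs : List Ty) :
      EqTms G vs vs' → EqCoTms G es es' →
      EqCo G (.des F i Bs vs es) (.des F i Bs vs' es')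
  | congCases {brs brs' : Branches} :
      EqBrs G brs brs' → EqCo G (.cases brs) (.cases brs')
  | congSpec {f f' : CoTm} (B : Ty) :
      EqCo G f f' → EqCo G (.spec B f) (.spec B f')
  | congCasePack {c c' : Cmd} (X y : Nat) :
      EqCmd G c c' → EqCo G (.casePack X y c) (.casePack X y c')

  inductive EqTms (G : GEnv) : Tms → Tms → Prop
  | nil : EqTms G .nil .nil
  | cons {t t' : Tm} {ts ts' : Tms} :
      EqTm G t t' → EqTms G ts ts' → EqTms G (.cons t ts) (.cons t' ts')

  inductive EqCoTms (G : GEnv) : CoTms → CoTms → Prop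
  | nil : EqCoTms G .nil .nil
  | cons {e e' : CoTm} {es es' : CoTms} :
      EqCo G e e' → EqCoTms G es es' → EqCoTms G (.cons e es) (.cons e' es')

  inductive EqBr (G : GEnv) : Branch → Branch → Prop
  | mk {c c' : Cmd} (tys cvs xs : List Nat) :
      EqCmd G c c' → EqBr G (.mk tys cvs xs c) (.mk tys cvs xs c')

  inductive EqBrs (G : GEnv) : Branches → Branches → Prop
  | nil : EqBrs G .nil .nil
  | cons {b b' : Branch} {bs bs' : Branches} :
      EqBr G b b' → EqBrs G bs bs' → EqBrs G (.cons b bs) (.cons b' bs')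
end

/-- The identity command ⟨x ‖ α⟩ on the canonical (co)variable 0. -/
def idCmd (S : Disc) : Cmd := .cut (.var 0) S (.covar 0)

/-- A parametric type isomorphism A ≅ B at discipline S (in the type-variable
    environment Θ): a pair of commands c' : (x:A ⊢ β:B) and c : (y:B ⊢ α:A)
    whose two compositions are equal to identity commands in the equational
    theory.  Because the commands are typed with an arbitrary Θ of free type
    variables, a single uniform witness covers every instantiation. -/
def IsIso (G : GEnv) (Θ : KEnv) (A B : Ty) (S : Disc) : Prop :=
  TyWf G Θ A S ∧ TyWf G Θ B S ∧
  ∃ cf cb : Cmd,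
    TyCmd G Θ (single 0 A) (single 0 B) cf ∧
    TyCmd G Θ (single 0 B) (single 0 A) cb ∧
    EqCmd G (.cut (.mu 0 cf) S (.mut 0 cb)) (idCmd S) ∧
    EqCmd G (.cut (.mu 0 cb) S (.mut 0 cf)) (idCmd S)

end SysD

namespace SysD


/-!
Cutting `μ0.p` against `μ̃0.q` composes commands, and this composition is associative at every
discipline: at `+` because every coterm is a covalue (βμ), at `−` because every term is a value
(βμ̃), and at the call-by-(co)need disciplines by the swap laws.  The identity command is a unit
for it up to ημ and ημ̃.  Reflexivity and symmetry are then immediate, and transitivity is the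
usual cancellation `(p₁ ∘ p₂) ∘ (q₂ ∘ q₁) = p₁ ∘ (p₂ ∘ q₂) ∘ q₁ = p₁ ∘ q₁ = id`.
-/

instance (G : GEnv) : Trans (EqCmd G) (EqCmd G) (EqCmd G) := ⟨EqCmd.trans⟩

def Cmd.comp (S : Disc) (p q : Cmd) : Cmd := .cut (.mu 0 p) S (.mut 0 q)

namespace Cmd

variable {G : GEnv} {S : Disc}

theorem zero_notMem_fvCo_mut (c : Cmd) : 0 ∉ fvCo (.mut 0 c) := by
  simp [fvCo, List.mem_filter]

theorem zero_notMem_fcvTm_mu (c : Cmd) : 0 ∉ fcvTm (.mu 0 c) := by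
  simp [fcvTm, List.mem_filter]

theorem substECmd_comp_zero (S : Disc) (p q : Cmd) (e : CoTm) :
    substECmd (comp S p q) 0 e = comp S p (substECmd q 0 e) := by
  simp [comp, substECmd, substETm, substECo]

theorem substVCmd_comp_zero (S : Disc) (p q : Cmd) (v : Tm) :
    substVCmd (comp S p q) 0 v = comp S (substVCmd p 0 v) q := by
  simp [comp, substVCmd, substVTm, substVCo]

theorem comp_congr_left {p p' : Cmd} (q : Cmd) (h : EqCmd G p p') :
    EqCmd G (comp S p q) (comp S p' q) :=
  .congCut S (.congMu 0 h) (.refl _)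

theorem comp_congr_right (p : Cmd) {q q' : Cmd} (h : EqCmd G q q') :
    EqCmd G (comp S p q) (comp S p q') :=
  .congCut S (.refl _) (.congMut 0 h)

theorem comp_assoc (S : Disc) (p q r : Cmd) :
    EqCmd G (comp S (comp S p q) r) (comp S p (comp S q r)) := by
  cases S
  case pos =>
    have hβ (c : Cmd) : EqCmd G (.cut (.mu 0 c) .pos (.mut 0 r)) (substECmd c 0 (.mut 0 r)) :=
      .betaMu 0 c (.pos _)
    calc EqCmd G (comp .pos (comp .pos p q) r) (comp .pos p (substECmd q 0 (.mut 0 r))) :=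
          substECmd_comp_zero .pos p q _ ▸ hβ (comp .pos p q)
      EqCmd G _ _ := comp_congr_right p (.symm (hβ q))
  case neg =>
    have hβ (c : Cmd) : EqCmd G (.cut (.mu 0 p) .neg (.mut 0 c)) (substVCmd c 0 (.mu 0 p)) :=
      .betaMut 0 c (.neg _)
    calc EqCmd G (comp .neg (comp .neg p q) r) (comp .neg (substVCmd q 0 (.mu 0 p)) r) :=
          comp_congr_left r (hβ q)
      EqCmd G _ _ := .symm (substVCmd_comp_zero .neg q r _ ▸ hβ (comp .neg q r))
  case lv =>
    exact .swapLv 0 0 q (zero_notMem_fvCo_mut r) (zero_notMem_fcvTm_mu p)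
  case ln =>
    exact .symm (.swapLn 0 0 q (zero_notMem_fvCo_mut r) (zero_notMem_fcvTm_mu p))

theorem eqTm_mu_idCmd (G : GEnv) (S : Disc) : EqTm G (.mu 0 (idCmd S)) (.var 0) :=
  .etaMu 0 S (by simp [fcvTm])

theorem eqCo_mut_idCmd (G : GEnv) (S : Disc) : EqCo G (.mut 0 (idCmd S)) (.covar 0) :=
  .etaMut 0 S (by simp [fvCo])

theorem comp_idCmd_idCmd : EqCmd G (comp S (idCmd S) (idCmd S)) (idCmd S) :=
  .congCut S (eqTm_mu_idCmd G S) (eqCo_mut_idCmd G S)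

/-- Stated under `μ̃0`, so that ημ̃ yields the unit law without substituting `x0` for itself. -/
theorem eqCo_mut_idCmd_comp (q : Cmd) :
    EqCo G (.mut 0 (comp S (idCmd S) q)) (.mut 0 q) :=
  .trans (.congMut 0 (.congCut S (eqTm_mu_idCmd G S) (.refl _)))
    (.etaMut 0 S (zero_notMem_fvCo_mut q))

theorem comp_comp_of_comp_eq_idCmd {p₁ p₂ q₁ q₂ : Cmd}
    (h₁ : EqCmd G (comp S p₁ q₁) (idCmd S)) (h₂ : EqCmd G (comp S p₂ q₂) (idCmd S)) :
    EqCmd G (comp S (comp S p₁ p₂) (comp S q₂ q₁)) (idCmd S) :=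
  calc EqCmd G (comp S (comp S p₁ p₂) (comp S q₂ q₁)) (comp S p₁ (comp S p₂ (comp S q₂ q₁))) :=
        comp_assoc S _ _ _
    EqCmd G _ (comp S p₁ (comp S (comp S p₂ q₂) q₁)) :=
        comp_congr_right p₁ (.symm (comp_assoc S _ _ _))
    EqCmd G _ (comp S p₁ (comp S (idCmd S) q₁)) := comp_congr_right p₁ (comp_congr_left q₁ h₂)
    EqCmd G _ (comp S p₁ q₁) := .congCut S (.refl _) (eqCo_mut_idCmd_comp q₁)
    EqCmd G _ (idCmd S) := h₁

end Cmd

theorem upd_upd_self {α : Type} (f : Nat → Option α) (n : Nat) (a b : α) :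
    upd (upd f n a) n b = upd f n b := by
  funext m
  by_cases h : m = n <;> simp [upd, h]

section Typing

variable {G : GEnv} {Θ : KEnv} {S : Disc}

theorem TyCmd.idCmd {A : Ty} (hA : TyWf G Θ A S) :
    TyCmd G Θ (single 0 A) (single 0 A) (idCmd S) :=
  .cut (.foc (.var (by simp [single, upd]))) hA (.foc (.covar (by simp [single, upd])))

theorem TyCmd.comp {A B C : Ty} {p q : Cmd} (hp : TyCmd G Θ (single 0 A) (single 0 B) p)
    (hB : TyWf G Θ B S) (hq : TyCmd G Θ (single 0 B) (single 0 C) q) :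
    TyCmd G Θ (single 0 A) (single 0 C) (p.comp S q) := by
  refine .cut (.mu ?_) hB (.mut ?_)
  · simpa only [single, upd_upd_self] using hp
  · simpa only [single, upd_upd_self] using hq

end Typing

namespace IsIso

variable {G : GEnv} {Θ : KEnv} {S : Disc}

theorem refl {A : Ty} (hA : TyWf G Θ A S) : IsIso G Θ A A S :=
  ⟨hA, hA, idCmd S, idCmd S, .idCmd hA, .idCmd hA, Cmd.comp_idCmd_idCmd, Cmd.comp_idCmd_idCmd⟩

theorem symm {A B : Ty} : IsIso G Θ A B S → IsIso G Θ B A S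
  | ⟨hA, hB, cf, cb, hf, hb, hfb, hbf⟩ => ⟨hB, hA, cb, cf, hb, hf, hbf, hfb⟩

theorem trans {A B C : Ty} : IsIso G Θ A B S → IsIso G Θ B C S → IsIso G Θ A C S
  | ⟨hA, hB, cf₁, cb₁, hf₁, hb₁, hfb₁, hbf₁⟩, ⟨_, hC, cf₂, cb₂, hf₂, hb₂, hfb₂, hbf₂⟩ =>
    ⟨hA, hC, cf₁.comp S cf₂, cb₂.comp S cb₁, hf₁.comp hB hf₂, hb₂.comp hB hb₁,
      Cmd.comp_comp_of_comp_eq_idCmd hfb₁ hfb₂, Cmd.comp_comp_of_comp_eq_idCmd hbf₂ hbf₁⟩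

end IsIso

/-- parametric type isomorphism is an equivalence relation on
    the (well-formed) types of each kind: reflexive (witnessed by identity
    commands), symmetric, and transitive (composing witnesses by cutting a μ
    against a μ̃, with the identities following from the swap, ημ and ημ̃
    laws). -/
theorem iso_equivalence :
    ∀ (G : GEnv) (Θ : KEnv) (S : Disc),
      (∀ A : Ty, TyWf G Θ A S → IsIso G Θ A A S) ∧
      (∀ A B : Ty, IsIso G Θ A B S → IsIso G Θ B A S) ∧
      (∀ A B C : Ty, IsIso G Θ A B S → IsIso G Θ B C S → IsIso G Θ A C S) :=
  fun _ _ _ => ⟨fun _ => .refl, fun _ _ => .symm, fun _ _ _ => .trans⟩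

end SysD
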